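/- Let G be a locally compact Abelian torsion group (every element has finite order) for which P⁺(G,ℂ) is nonempty. Then P⁺_proj(G,ℂ^ℓ) = P⁺(G,ℂ^ℓ) for every ℓ ∈ ℕ: every continuous translation invariant matrix valued kernel on G all of whose scalar valued projections are strictly positive definite is itself strictly positive definite. -/

import Mathlib

/-!
Translation invariance makes `K x y` a function of the difference of `x` and `y`, and the finitely
many points of a test sum generate a finite subgroup because the group is torsion. On a finite
abelian group `A` the Fourier transform `K̂ ψ = ∑ₐ ψ a • K a 0` diagonalises the quadratic form:
`|A| ∑_{μ,ν} ⟨K(y_μ, y_ν) v_μ, v_ν⟩ = ∑_ψ ⟨K̂ ψ ŵ_ψ, ŵ_ψ⟩` with `ŵ_ψ = ∑_μ conj (ψ y_μ) v_μ`.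
Up to the factor `|A|`, `⟨K̂ ψ w, w⟩` is the scalar form of the projection `K_w` evaluated at all
points of `A` with coefficients `ψ`, hence positive for `w ≠ 0`; and Fourier inversion shows that
some `ŵ_ψ` is nonzero.
-/

open scoped ComplexOrder

/-- Complex "inner product" on finite tuples, linear in the first argument and
conjugate-linear in the second: `cip v w = ∑ i, v i * conj (w i)`. -/
noncomputable def cip {ι : Type*} [Fintype ι] (v w : ι → ℂ) : ℂ :=
  ∑ i, v i * (starRingEnd ℂ) (w i)

/-- A matrix valued kernel is positive definite. -/
def IsPDMat {X : Type*} {ℓ : ℕ} (K : X → X → Matrix (Fin ℓ) (Fin ℓ) ℂ) : Prop :=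
  ∀ (n : ℕ) (x : Fin n → X), Function.Injective x →
    ∀ v : Fin n → Fin ℓ → ℂ,
      0 ≤ ∑ μ : Fin n, ∑ ν : Fin n, cip ((K (x μ) (x ν)).mulVec (v μ)) (v ν)

/-- A matrix valued kernel is strictly positive definite. -/
def IsSPDMat {X : Type*} {ℓ : ℕ} (K : X → X → Matrix (Fin ℓ) (Fin ℓ) ℂ) : Prop :=
  ∀ (n : ℕ) (x : Fin n → X), Function.Injective x →
    ∀ v : Fin n → Fin ℓ → ℂ, (∃ μ, v μ ≠ 0) →
      0 < ∑ μ : Fin n, ∑ ν : Fin n, cip ((K (x μ) (x ν)).mulVec (v μ)) (v ν)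

/-- A scalar valued kernel is positive definite. -/
def IsPDKer {X : Type*} (k : X → X → ℂ) : Prop :=
  ∀ (n : ℕ) (x : Fin n → X), Function.Injective x →
    ∀ c : Fin n → ℂ,
      0 ≤ ∑ μ : Fin n, ∑ ν : Fin n, c μ * (starRingEnd ℂ) (c ν) * k (x μ) (x ν)

/-- A scalar valued kernel is strictly positive definite. -/
def IsSPDKer {X : Type*} (k : X → X → ℂ) : Prop :=
  ∀ (n : ℕ) (x : Fin n → X), Function.Injective x →
    ∀ c : Fin n → ℂ, (∃ μ, c μ ≠ 0) →
      0 < ∑ μ : Fin n, ∑ ν : Fin n, c μ * (starRingEnd ℂ) (c ν) * k (x μ) (x ν)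

/-- The scalar valued projection `K_v(x,y) = ⟨K(x,y)v, v⟩` of a matrix valued kernel. -/
noncomputable def projKer {X : Type*} {ℓ : ℕ} (K : X → X → Matrix (Fin ℓ) (Fin ℓ) ℂ)
    (v : Fin ℓ → ℂ) : X → X → ℂ :=
  fun x y => cip ((K x y).mulVec v) v

open Finset Matrix

section Sesquilinear

variable {ι : Type*} [Fintype ι]

lemma cip_sum_left {α : Type*} (s : Finset α) (u : α → ι → ℂ) (w : ι → ℂ) :
    cip (∑ a ∈ s, u a) w = ∑ a ∈ s, cip (u a) w :=
  sum_dotProduct s u (star w)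

lemma cip_sum_right {α : Type*} (s : Finset α) (u : ι → ℂ) (w : α → ι → ℂ) :
    cip u (∑ a ∈ s, w a) = ∑ a ∈ s, cip u (w a) := by
  change u ⬝ᵥ star _ = ∑ a ∈ s, u ⬝ᵥ star _
  rw [star_sum, dotProduct_sum]

lemma cip_smul_left (c : ℂ) (u w : ι → ℂ) : cip (c • u) w = c * cip u w :=
  smul_dotProduct c u (star w)

lemma cip_smul_right (c : ℂ) (u w : ι → ℂ) : cip u (c • w) = starRingEnd ℂ c * cip u w := by
  change u ⬝ᵥ star _ = _ * u ⬝ᵥ star _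
  rw [star_smul, dotProduct_smul, smul_eq_mul, starRingEnd_apply]

end Sesquilinear

lemma cip_mulVec_smul_smul {ℓ : ℕ} (M : Matrix (Fin ℓ) (Fin ℓ) ℂ) (a b : ℂ) (u w : Fin ℓ → ℂ) :
    cip (M *ᵥ (a • u)) (b • w) = a * starRingEnd ℂ b * cip (M *ᵥ u) w := by
  rw [Matrix.mulVec_smul, cip_smul_left, cip_smul_right]
  ring

lemma cip_sum_smul_mulVec {α : Type*} {ℓ : ℕ} (s : Finset α) (c : α → ℂ)
    (M : α → Matrix (Fin ℓ) (Fin ℓ) ℂ) (u w : Fin ℓ → ℂ) :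
    cip ((∑ a ∈ s, c a • M a) *ᵥ u) w = ∑ a ∈ s, c a * cip (M a *ᵥ u) w := by
  simp only [Matrix.sum_mulVec, Matrix.smul_mulVec, cip_sum_left, cip_smul_left]

lemma cip_mulVec_sum_smul {α : Type*} {ℓ : ℕ} (s : Finset α) (M : Matrix (Fin ℓ) (Fin ℓ) ℂ)
    (c : α → ℂ) (v : α → Fin ℓ → ℂ) :
    cip (M *ᵥ ∑ μ ∈ s, c μ • v μ) (∑ ν ∈ s, c ν • v ν) =
      ∑ μ ∈ s, ∑ ν ∈ s, c μ * starRingEnd ℂ (c ν) * cip (M *ᵥ v μ) (v ν) := by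
  simp only [Matrix.mulVec_sum, cip_sum_left, cip_sum_right, cip_mulVec_smul_smul]
  exact sum_comm

lemma IsSPDMat.isSPDKer_projKer {X : Type*} {ℓ : ℕ} {K : X → X → Matrix (Fin ℓ) (Fin ℓ) ℂ}
    (hK : IsSPDMat K) {v : Fin ℓ → ℂ} (hv : v ≠ 0) : IsSPDKer (projKer K v) := by
  rintro n x hx c ⟨μ, hμ⟩
  simpa only [projKer, cip_mulVec_smul_smul] using
    hK n x hx (fun μ => c μ • v) ⟨μ, smul_ne_zero hμ hv⟩

lemma IsSPDKer.comp_injective {X Y : Type*} {k : Y → Y → ℂ} (hk : IsSPDKer k) {e : X → Y}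
    (he : Function.Injective e) : IsSPDKer (fun a b => k (e a) (e b)) :=
  fun n x hx => hk n (e ∘ x) (he.comp hx)

lemma apply_eq_apply_sub_zero {A X : Type*} [AddCommGroup A] {K : A → A → X}
    (hK : ∀ g x y, K (g + x) (g + y) = K x y) (a b : A) : K a b = K (a - b) 0 := by
  simpa using hK b (a - b) 0

lemma IsSPDKer.sum_univ_pos {X : Type*} [Fintype X] {k : X → X → ℂ} (hk : IsSPDKer k)
    {c : X → ℂ} (hc : c ≠ 0) : 0 < ∑ a, ∑ b, c a * starRingEnd ℂ (c b) * k a b := by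
  obtain ⟨a, ha⟩ := Function.ne_iff.mp hc
  let e := (Fintype.equivFin X).symm
  convert hk _ e e.injective (c ∘ e) ⟨e.symm a, by simpa using ha⟩ using 1
  rw [← e.sum_comp]
  refine sum_congr rfl fun μ _ => ?_
  rw [← e.sum_comp]
  rfl

section FiniteAbelian

variable {A : Type*} [AddCommGroup A] [Fintype A]

lemma sum_sum_apply_sub {M : Type*} [AddCommMonoid M] (F : A → M) :
    ∑ a, ∑ b, F (a - b) = Fintype.card A • ∑ a, F a := by
  calc ∑ a, ∑ b, F (a - b) = ∑ b, ∑ a, F (a - b) := sum_comm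
    _ = ∑ _b : A, ∑ a, F a := sum_congr rfl fun b _ => (Equiv.subRight b).sum_comp F
    _ = Fintype.card A • ∑ a, F a := by rw [sum_const, card_univ]

lemma AddChar.mul_conj_eq_apply_sub (ψ : AddChar A ℂ) (a b : A) :
    ψ a * starRingEnd ℂ (ψ b) = ψ (a - b) := by
  rw [← AddChar.inv_apply_eq_conj, AddChar.map_sub_eq_div, div_eq_mul_inv]

lemma sum_addChar_apply_sub [DecidableEq A] (a b : A) :
    ∑ ψ : AddChar A ℂ, ψ (a - b) = if a = b then (Fintype.card A : ℂ) else 0 := by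
  simp only [AddChar.sum_apply_eq_ite, sub_eq_zero]

lemma sum_addChar_mul_pos {k : A → A → ℂ} (hk : ∀ g x y, k (g + x) (g + y) = k x y)
    (hspd : IsSPDKer k) (ψ : AddChar A ℂ) : 0 < ∑ a, ψ a * k a 0 := by
  have h := hspd.sum_univ_pos (c := ψ) (AddChar.coe_ne_zero ψ)
  have hterm : ∀ a b, ψ a * starRingEnd ℂ (ψ b) * k a b = ψ (a - b) * k (a - b) 0 := by
    intro a b
    rw [AddChar.mul_conj_eq_apply_sub, apply_eq_apply_sub_zero hk a b]
  simp only [hterm] at h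
  rw [sum_sum_apply_sub (fun a => ψ a * k a 0), nsmul_eq_mul] at h
  exact (mul_pos_iff_of_pos_left (by exact_mod_cast Fintype.card_pos)).mp h

variable {ℓ : ℕ}

noncomputable def fourierMat (K : A → A → Matrix (Fin ℓ) (Fin ℓ) ℂ) (ψ : AddChar A ℂ) :
    Matrix (Fin ℓ) (Fin ℓ) ℂ :=
  ∑ a, ψ a • K a 0

noncomputable def fourierVec {n : ℕ} (y : Fin n → A) (v : Fin n → Fin ℓ → ℂ) (ψ : AddChar A ℂ) :
    Fin ℓ → ℂ :=
  ∑ μ, ψ (-y μ) • v μ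

lemma cip_fourierMat_pos {K : A → A → Matrix (Fin ℓ) (Fin ℓ) ℂ}
    (hK : ∀ g x y, K (g + x) (g + y) = K x y) (hproj : ∀ v, v ≠ 0 → IsSPDKer (projKer K v))
    (ψ : AddChar A ℂ) {w : Fin ℓ → ℂ} (hw : w ≠ 0) : 0 < cip (fourierMat K ψ *ᵥ w) w := by
  rw [fourierMat, cip_sum_smul_mulVec]
  exact sum_addChar_mul_pos (fun g x y => by simp only [projKer, hK]) (hproj w hw) ψ

lemma sum_cip_fourierMat_fourierVec {K : A → A → Matrix (Fin ℓ) (Fin ℓ) ℂ}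
    (hK : ∀ g x y, K (g + x) (g + y) = K x y) {n : ℕ} (y : Fin n → A) (v : Fin n → Fin ℓ → ℂ) :
    ∑ ψ, cip (fourierMat K ψ *ᵥ fourierVec y v ψ) (fourierVec y v ψ) =
      Fintype.card A * ∑ μ, ∑ ν, cip (K (y μ) (y ν) *ᵥ v μ) (v ν) := by
  classical
  set t : Fin n → Fin n → A → ℂ := fun μ ν a => cip (K a 0 *ᵥ v μ) (v ν)
  have hchar : ∀ (ψ : AddChar A ℂ) μ ν a,
      ψ (-y μ) * starRingEnd ℂ (ψ (-y ν)) * ψ a = ψ (a - (y μ - y ν)) := by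
    intro ψ μ ν a
    rw [AddChar.mul_conj_eq_apply_sub, ← AddChar.map_add_eq_mul]
    congr 1
    abel
  calc ∑ ψ, cip (fourierMat K ψ *ᵥ fourierVec y v ψ) (fourierVec y v ψ)
      = ∑ ψ : AddChar A ℂ, ∑ μ, ∑ ν, ∑ a, ψ (a - (y μ - y ν)) * t μ ν a := by
        simp only [fourierVec, cip_mulVec_sum_smul, fourierMat, cip_sum_smul_mulVec, mul_sum,
          ← mul_assoc, hchar, t]
    _ = ∑ μ, ∑ ν, ∑ a, (∑ ψ : AddChar A ℂ, ψ (a - (y μ - y ν))) * t μ ν a := by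
        rw [sum_comm]
        refine sum_congr rfl fun μ _ => ?_
        rw [sum_comm]
        refine sum_congr rfl fun ν _ => ?_
        rw [sum_comm]
        simp only [sum_mul]
    _ = Fintype.card A * ∑ μ, ∑ ν, cip (K (y μ) (y ν) *ᵥ v μ) (v ν) := by
        simp only [sum_addChar_apply_sub, ite_mul, zero_mul, sum_ite_eq', mem_univ, if_true,
          mul_sum, apply_eq_apply_sub_zero hK (y _), t]

lemma sum_addChar_smul_fourierVec {n : ℕ} {y : Fin n → A} (hy : Function.Injective y)
    (v : Fin n → Fin ℓ → ℂ) (μ₀ : Fin n) :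
    ∑ ψ : AddChar A ℂ, ψ (y μ₀) • fourierVec y v ψ = Fintype.card A • v μ₀ := by
  classical
  simp only [fourierVec, smul_sum, smul_smul, ← AddChar.map_add_eq_mul, ← sub_eq_add_neg]
  rw [sum_comm]
  simp only [← sum_smul, sum_addChar_apply_sub, hy.eq_iff, ite_smul, zero_smul, sum_ite_eq,
    mem_univ, if_true, Nat.cast_smul_eq_nsmul]

end FiniteAbelian

theorem isSPDMat_of_isSPDKer_projKer {A : Type*} [AddCommGroup A] [Finite A] {ℓ : ℕ}
    {K : A → A → Matrix (Fin ℓ) (Fin ℓ) ℂ} (hK : ∀ g x y, K (g + x) (g + y) = K x y)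
    (hproj : ∀ v, v ≠ 0 → IsSPDKer (projKer K v)) : IsSPDMat K := by
  cases nonempty_fintype A
  rintro n y hy v ⟨μ₀, hμ₀⟩
  obtain ⟨ψ₀, hψ₀⟩ : ∃ ψ, fourierVec y v ψ ≠ 0 := by
    by_contra! h
    have hinv := sum_addChar_smul_fourierVec hy v μ₀
    simp only [h, smul_zero, sum_const_zero] at hinv
    exact hμ₀ ((smul_eq_zero.mp hinv.symm).resolve_left Fintype.card_ne_zero)
  have hpos : 0 < ∑ ψ, cip (fourierMat K ψ *ᵥ fourierVec y v ψ) (fourierVec y v ψ) := by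
    refine sum_pos' (fun ψ _ => ?_) ⟨ψ₀, mem_univ _, cip_fourierMat_pos hK hproj ψ₀ hψ₀⟩
    by_cases h : fourierVec y v ψ = 0
    · simp [h, cip]
    · exact (cip_fourierMat_pos hK hproj ψ h).le
  rw [sum_cip_fourierMat_fourierVec hK] at hpos
  exact (mul_pos_iff_of_pos_left (by exact_mod_cast Fintype.card_pos)).mp hpos

theorem isSPDMat_of_isMulTorsion {G : Type*} [CommGroup G] (hG : IsMulTorsion G) {ℓ : ℕ}
    {K : G → G → Matrix (Fin ℓ) (Fin ℓ) ℂ} (hK : ∀ g x y, K (g * x) (g * y) = K x y)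
    (hproj : ∀ v, v ≠ 0 → IsSPDKer (projKer K v)) : IsSPDMat K := by
  intro n x hx
  let H := Subgroup.closure (Set.range x)
  have : Group.FG H := Group.closure_finite_fg _
  have : Finite H := CommGroup.finite_of_fg_isMulTorsion H (hG.subgroup H)
  -- Characters of finite abelian groups are available as `AddChar`s, so `H` is viewed additively.
  let ι : Additive H → G := fun a => (a.toMul : G)
  have hι : Function.Injective ι := Subtype.val_injective.comp Additive.toMul.injective
  have hspd : IsSPDMat (fun a b => K (ι a) (ι b)) :=
    isSPDMat_of_isSPDKer_projKer (fun g a b => hK (ι g) (ι a) (ι b))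
      fun v hv => (hproj v hv).comp_injective hι
  let y : Fin n → Additive H := fun μ => .ofMul ⟨x μ, Subgroup.subset_closure ⟨μ, rfl⟩⟩
  exact hspd n y (fun μ ν h => hx (congrArg ι h))

theorem stmt_10_general {G : Type*} [CommGroup G] [TopologicalSpace G]
    (htors : ∀ g : G, IsOfFinOrder g) :
    ∀ ℓ : ℕ, 1 ≤ ℓ →
      {K : G → G → Matrix (Fin ℓ) (Fin ℓ) ℂ |
        (Continuous fun p : G × G => K p.1 p.2) ∧
        (∀ g x y : G, K (g * x) (g * y) = K x y) ∧
        ∀ v : Fin ℓ → ℂ, v ≠ 0 → IsSPDKer (projKer K v)} =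
      {K : G → G → Matrix (Fin ℓ) (Fin ℓ) ℂ |
        (Continuous fun p : G × G => K p.1 p.2) ∧
        (∀ g x y : G, K (g * x) (g * y) = K x y) ∧ IsSPDMat K} := by
  intro ℓ _
  ext K
  refine ⟨fun ⟨hc, hK, hproj⟩ => ⟨hc, hK, isSPDMat_of_isMulTorsion htors hK hproj⟩,
    fun ⟨hc, hK, hspd⟩ => ⟨hc, hK, fun _ hv => hspd.isSPDKer_projKer hv⟩⟩

/-- Let `G` be a locally compact Abelian torsion group for which `P⁺(G,ℂ)` is
nonempty.  Then `P⁺_proj(G,ℂ^ℓ) = P⁺(G,ℂ^ℓ)` for every `ℓ ∈ ℕ`: every continuous translation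
invariant matrix valued kernel on `G` all of whose scalar valued projections are strictly
positive definite is itself strictly positive definite. -/
theorem stmt_10 {G : Type*} [CommGroup G] [TopologicalSpace G] [IsTopologicalGroup G]
    [LocallyCompactSpace G]
    (htors : ∀ g : G, IsOfFinOrder g)
    (hne : ∃ k : G → G → ℂ,
      (Continuous fun p : G × G => k p.1 p.2) ∧
      (∀ g x y : G, k (g * x) (g * y) = k x y) ∧
      IsSPDKer k) :
    ∀ ℓ : ℕ, 1 ≤ ℓ →
      {K : G → G → Matrix (Fin ℓ) (Fin ℓ) ℂ |
        (Continuous fun p : G × G => K p.1 p.2) ∧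
        (∀ g x y : G, K (g * x) (g * y) = K x y) ∧
        ∀ v : Fin ℓ → ℂ, v ≠ 0 → IsSPDKer (projKer K v)} =
      {K : G → G → Matrix (Fin ℓ) (Fin ℓ) ℂ |
        (Continuous fun p : G × G => K p.1 p.2) ∧
        (∀ g x y : G, K (g * x) (g * y) = K x y) ∧ IsSPDMat K} :=
  stmt_10_general htors
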